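/- Necessity of the prior assumption: let G_{1,n} := E[μ₂ − μ₁ | n independent samples from arm 1]. Suppose Pr[G_{1,n} > 0] = 0 for all n. Then any BIC recommendation policy never recommends arm 2: by induction on t, if a_1,…,a_t = 1, then E[μ₂ − μ₁ | a_{t+1} = 2] = E[G_{1,t} | a_{t+1} = 2] ≤ 0, contradicting BIC, hence Pr[a_{t+1} = 2] = 0. -/
import Mathlib


open scoped Classical

noncomputable def pr {Ω : Type*} [Fintype Ω] (w : Ω → ℝ) (A : Ω → Prop) : ℝ :=
  ∑ ω, if A ω then w ω else 0

noncomputable def cexp {Ω : Type*} [Fintype Ω] (w : Ω → ℝ) (X : Ω → ℝ) (A : Ω → Prop) : ℝ :=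
  (∑ ω, if A ω then w ω * X ω else 0) / pr w A

noncomputable def cexpRV {Ω : Type*} [Fintype Ω] {α : Type*} (w : Ω → ℝ) (X : Ω → ℝ)
    (Y : Ω → α) : Ω → ℝ :=
  fun ω => cexp w X (fun ω' => Y ω' = Y ω)

section Aux

variable {Ω : Type*} [Fintype Ω]

/-- The numerator of `cexp`. -/
noncomputable def esum (w f : Ω → ℝ) (A : Ω → Prop) : ℝ :=
  ∑ ω, if A ω then w ω * f ω else 0

lemma cexp_eq (w f : Ω → ℝ) (A : Ω → Prop) : cexp w f A = esum w f A / pr w A := rfl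

lemma pr_nonneg (w : Ω → ℝ) (hw0 : ∀ ω, 0 ≤ w ω) (A : Ω → Prop) : 0 ≤ pr w A :=
  Finset.sum_nonneg fun ω _ => by by_cases h : A ω <;> simp [pr, h, hw0 ω]

lemma pr_congr (w : Ω → ℝ) {A B : Ω → Prop} (h : ∀ ω, A ω ↔ B ω) : pr w A = pr w B :=
  Finset.sum_congr rfl fun ω _ => if_congr (h ω) rfl rfl

lemma esum_congr (w f : Ω → ℝ) {A B : Ω → Prop} (h : ∀ ω, w ω ≠ 0 → (A ω ↔ B ω)) :
    esum w f A = esum w f B := by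
  refine Finset.sum_congr rfl fun ω _ => ?_
  by_cases hw : w ω = 0
  · by_cases hA : A ω <;> by_cases hB : B ω <;> simp [hA, hB, hw]
  · exact if_congr (h ω hw) rfl rfl

lemma pr_eq_zero (w : Ω → ℝ) (hw0 : ∀ ω, 0 ≤ w ω) {A : Ω → Prop} (h : pr w A = 0) :
    ∀ ω, A ω → w ω = 0 := by
  intro ω hA
  have := (Finset.sum_eq_zero_iff_of_nonneg
    (fun ω _ => by by_cases h : A ω <;> simp [h, hw0 ω])).mp h ω (Finset.mem_univ ω)
  simpa [hA] using this

lemma esum_eq_zero (w f : Ω → ℝ) {A : Ω → Prop} (hz : ∀ ω, A ω → w ω = 0) :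
    esum w f A = 0 := by
  refine Finset.sum_eq_zero fun ω _ => ?_
  by_cases h : A ω
  · simp [h, hz ω h]
  · simp [h]

lemma pr_pos_elim (w : Ω → ℝ) {A : Ω → Prop} (h : pr w A ≠ 0) :
    ∃ ω, A ω ∧ w ω ≠ 0 := by
  by_contra hcon
  push_neg at hcon
  apply h
  refine Finset.sum_eq_zero fun ω _ => ?_
  by_cases hA : A ω
  · simp [hA, hcon ω hA]
  · simp [hA]

lemma sum_fiber' {γ : Type*} [DecidableEq γ] (g : Ω → γ) (f : Ω → ℝ) :
    ∑ ω, f ω = ∑ k ∈ Finset.image g Finset.univ,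
      ∑ ω, if g ω = k then f ω else 0 := by
  rw [← Finset.sum_fiberwise_of_maps_to
    (fun x _ => Finset.mem_image_of_mem g (Finset.mem_univ x)) f]
  refine Finset.sum_congr rfl fun k _ => ?_
  rw [Finset.sum_filter]

lemma esum_split {γ : Type*} [DecidableEq γ] (w f : Ω → ℝ) (g : Ω → γ) (Q : γ → Prop) :
    esum w f (fun ω => Q (g ω))
      = ∑ k ∈ Finset.image g Finset.univ,
          if Q k then esum w f (fun ω => g ω = k) else 0 := by
  rw [esum, sum_fiber' g]
  refine Finset.sum_congr rfl fun k _ => ?_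
  by_cases hq : Q k
  · rw [if_pos hq, esum]
    refine Finset.sum_congr rfl fun ω _ => ?_
    by_cases h : g ω = k
    · simp [h, hq]
    · simp [h]
  · rw [if_neg hq]
    refine Finset.sum_eq_zero fun ω _ => ?_
    by_cases h : g ω = k
    · simp [h, hq]
    · simp [h]

lemma key (w μ1 μ2 : Ω → ℝ) (C : Ω → Prop) :
    esum w (fun ω => μ2 ω - μ1 ω) C
      = ∑ p ∈ Finset.image (fun ω => (μ1 ω, μ2 ω)) Finset.univ,
          (p.2 - p.1) * pr w (fun ω => C ω ∧ μ1 ω = p.1 ∧ μ2 ω = p.2) := by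
  rw [esum, sum_fiber' (fun ω => (μ1 ω, μ2 ω))]
  refine Finset.sum_congr rfl fun p _ => ?_
  rw [pr, Finset.mul_sum]
  refine Finset.sum_congr rfl fun ω _ => ?_
  by_cases hx : μ1 ω = p.1 <;> by_cases hy : μ2 ω = p.2 <;> by_cases hc : C ω <;>
    simp [Prod.ext_iff, hx, hy, hc] <;> ring

end Aux

/-- Necessity of the prior assumption: let `G_{1,n} = E[μ₂ − μ₁ | first n samples of
arm 1]`. Suppose `Pr[G_{1,n} > 0] = 0` for all `n`. Then any BIC recommendation policy —
whose round-`t` recommendation, as long as only arm 1 was played before, is determined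
by the first `t` samples of arm 1 and a random seed `U` independent of
`(samples, μ₁, μ₂)` — never recommends arm 2. -/
theorem stmt13 {Ω β : Type*} [Fintype Ω]
    (w : Ω → ℝ) (hw0 : ∀ ω, 0 ≤ w ω) (hw1 : ∑ ω, w ω = 1)
    (μ1 μ2 : Ω → ℝ)
    (h1 : ∀ ω, μ1 ω ∈ Set.Icc (0:ℝ) 1) (h2 : ∀ ω, μ2 ω ∈ Set.Icc (0:ℝ) 1)
    (hmeans : ∑ ω, w ω * μ2 ω ≤ ∑ ω, w ω * μ1 ω)
    (X : ℕ → Ω → ℝ) (U : Ω → β)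
    (a : ℕ → Ω → ℕ) (haval : ∀ t ω, a t ω = 1 ∨ a t ω = 2)
    (hdet : ∀ t : ℕ, ∃ gfun : (Fin t → ℝ) → β → Prop,
      ∀ ω, (∀ s, s < t → a s ω = 1) →
        (a t ω = 2 ↔ gfun (fun i => X i.val ω) (U ω)))
    (hindep : ∀ (t : ℕ) (v : Fin t → ℝ) (x y : ℝ) (u : β),
      pr w (fun ω => (∀ i : Fin t, X i.val ω = v i) ∧ μ1 ω = x ∧ μ2 ω = y ∧ U ω = u)
        = pr w (fun ω => (∀ i : Fin t, X i.val ω = v i) ∧ μ1 ω = x ∧ μ2 ω = y)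
            * pr w (fun ω => U ω = u))
    (hBIC : ∀ t, 0 < pr w (fun ω => a t ω = 2) →
      0 < cexp w (fun ω => μ2 ω - μ1 ω) (fun ω => a t ω = 2))
    (hGnonpos : ∀ n : ℕ,
      pr w (fun ω =>
        0 < cexpRV w (fun ω' => μ2 ω' - μ1 ω') (fun ω' => fun i : Fin n => X i.val ω') ω)
        = 0) :
    ∀ t, pr w (fun ω => a t ω = 2) = 0 := by
  intro t
  induction t using Nat.strong_induction_on with
  | _ t ih =>
  by_contra hne
  have hprpos : 0 < pr w (fun ω => a t ω = 2) :=
    lt_of_le_of_ne (pr_nonneg w hw0 _) (Ne.symm hne)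
  obtain ⟨gfun, hg⟩ := hdet t
  set d : Ω → ℝ := fun ω => μ2 ω - μ1 ω with hd
  set P : Ω → (Fin t → ℝ) := fun ω => fun i : Fin t => X i.val ω with hP
  -- numerator of the BIC conditional expectation is positive
  have hSpos : 0 < esum w d (fun ω => a t ω = 2) := by
    have hc : 0 < esum w d (fun ω => a t ω = 2) / pr w (fun ω => a t ω = 2) :=
      hBIC t hprpos
    rcases div_pos_iff.mp hc with ⟨h, _⟩ | ⟨_, h⟩
    · exact h
    · linarith
  -- rewrite the numerator using the determinism hypothesis
  have hrw : esum w d (fun ω => a t ω = 2) = esum w d (fun ω => gfun (P ω) (U ω)) := by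
    refine esum_congr w d fun ω hwω => ?_
    have hall : ∀ s, s < t → a s ω = 1 := by
      intro s hs
      rcases haval s ω with h | h
      · exact h
      · exact absurd (pr_eq_zero w hw0 (ih s hs) ω h) hwω
    exact hg ω hall
  -- the "gain" numerators are all nonpositive
  have hN : ∀ v : Fin t → ℝ, esum w d (fun ω => P ω = v) ≤ 0 := by
    intro v
    by_cases hp : pr w (fun ω => P ω = v) = 0
    · exact le_of_eq (esum_eq_zero w d (pr_eq_zero w hw0 hp))
    · have hppos : 0 < pr w (fun ω => P ω = v) :=
        lt_of_le_of_ne (pr_nonneg w hw0 _) (Ne.symm hp)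
      obtain ⟨ω₀, hv, hw₀⟩ := pr_pos_elim w hp
      have hGle : cexpRV w d P ω₀ ≤ 0 := by
        by_contra hcc
        push_neg at hcc
        exact hw₀ (pr_eq_zero w hw0 (hGnonpos t) ω₀ hcc)
      have hGle' : esum w d (fun ω' => P ω' = P ω₀) / pr w (fun ω' => P ω' = P ω₀) ≤ 0 :=
        hGle
      rw [hv] at hGle'
      rcases div_nonpos_iff.mp hGle' with ⟨hn1, hn2⟩ | ⟨hn1, hn2⟩
      · linarith
      · exact hn1
  -- factor the seed out by independence
  have hM : ∀ (v : Fin t → ℝ) (u : β),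
      esum w d (fun ω => P ω = v ∧ U ω = u)
        = esum w d (fun ω => P ω = v) * pr w (fun ω => U ω = u) := by
    intro v u
    rw [key w μ1 μ2 (fun ω => P ω = v ∧ U ω = u), key w μ1 μ2 (fun ω => P ω = v),
        Finset.sum_mul]
    refine Finset.sum_congr rfl fun p _ => ?_
    have e1 : pr w (fun ω => (P ω = v ∧ U ω = u) ∧ μ1 ω = p.1 ∧ μ2 ω = p.2)
        = pr w (fun ω => (∀ i : Fin t, X i.val ω = v i) ∧ μ1 ω = p.1 ∧ μ2 ω = p.2 ∧ U ω = u) := by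
      refine pr_congr w fun ω => ?_
      constructor
      · rintro ⟨⟨hPv, hU⟩, hx, hy⟩
        exact ⟨fun i => congrFun hPv i, hx, hy, hU⟩
      · rintro ⟨hPv, hx, hy, hU⟩
        exact ⟨⟨funext hPv, hU⟩, hx, hy⟩
    have e2 : pr w (fun ω => P ω = v ∧ μ1 ω = p.1 ∧ μ2 ω = p.2)
        = pr w (fun ω => (∀ i : Fin t, X i.val ω = v i) ∧ μ1 ω = p.1 ∧ μ2 ω = p.2) := by
      refine pr_congr w fun ω => ?_
      constructor
      · rintro ⟨hPv, hx, hy⟩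
        exact ⟨fun i => congrFun hPv i, hx, hy⟩
      · rintro ⟨hPv, hx, hy⟩
        exact ⟨funext hPv, hx, hy⟩
    rw [e1, e2, hindep t v p.1 p.2 u]
    ring
  -- conclude nonpositivity of the numerator, contradiction
  have hSle : esum w d (fun ω => gfun (P ω) (U ω)) ≤ 0 := by
    have hsplit : esum w d (fun ω => gfun (P ω) (U ω))
        = ∑ k ∈ Finset.image (fun ω => (P ω, U ω)) Finset.univ,
            if gfun k.1 k.2 then esum w d (fun ω => (P ω, U ω) = k) else 0 :=
      esum_split w d (fun ω => (P ω, U ω)) (fun k => gfun k.1 k.2)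
    rw [hsplit]
    refine Finset.sum_nonpos fun k _ => ?_
    by_cases hgk : gfun k.1 k.2
    · rw [if_pos hgk]
      have : esum w d (fun ω => (P ω, U ω) = k)
          = esum w d (fun ω => P ω = k.1 ∧ U ω = k.2) :=
        esum_congr w d fun ω _ => Prod.ext_iff
      rw [this, hM k.1 k.2]
      exact mul_nonpos_of_nonpos_of_nonneg (hN k.1) (pr_nonneg w hw0 _)
    · rw [if_neg hgk]
  rw [hrw] at hSpos
  linarith
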